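/- Let Π ∈ ℝ^{m×n} have rank at most K+1, with singular value decomposition Π = UΣVᵀ, U = (U₁,U₂), V = (V₁,V₂) where columns of U₂, V₂ correspond to zero singular values. For Δ ∈ ℝ^{m×n}, define P(Δ) = U₂U₂ᵀ Δ V₂V₂ᵀ and M(Δ) = Δ − P(Δ). Then rank(M(Δ)) ≤ 2(K+1). -/

import Mathlib

/- Since `U₂U₂ᵀ = 1 - U₁U₁ᵀ` and `V₂V₂ᵀ = 1 - V₁V₁ᵀ`, we get
`M(Δ) = U₁(U₁ᵀΔ) + (U₂U₂ᵀΔV₁)V₁ᵀ`, a sum of two matrices factoring through the `k` columns of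
`U₁` and of `V₁`; hence `rank M(Δ) ≤ 2 · #k`. Finally `Σ = U₁ᵀΠV₁` is diagonal with nonzero
diagonal, so `#k = rank Σ ≤ rank Π ≤ K + 1`. -/

open Matrix BigOperators

noncomputable def frobNorm {m n : Type*} [Fintype m] [Fintype n] (A : Matrix m n ℝ) : ℝ :=
  Real.sqrt (∑ i, ∑ j, (A i j) ^ 2)

noncomputable def nuclearNorm {m n : Type*} [Fintype m] [Fintype n] [DecidableEq n]
    (A : Matrix m n ℝ) : ℝ :=
  ∑ j, Real.sqrt ((Matrix.isHermitian_conjTranspose_mul_self A).eigenvalues j)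

noncomputable def opNorm {m n : Type*} [Fintype m] [Fintype n] [DecidableEq n]
    (A : Matrix m n ℝ) : ℝ :=
  ‖LinearMap.toContinuousLinearMap (Matrix.toEuclideanLin A)‖

namespace Matrix

variable {m n k l R : Type*} [Fintype n] [Fintype k] [Fintype l]

theorem rank_mul_add_mul_le [CommRing R] [StrongRankCondition R]
    (A : Matrix m k R) (B : Matrix k n R) (C : Matrix m l R) (D : Matrix l n R) :
    (A * B + C * D).rank ≤ Fintype.card k + Fintype.card l := by
  rw [← fromCols_mul_fromRows, ← Fintype.card_sum]
  exact (rank_mul_le_left _ _).trans (rank_le_card_width _)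

theorem rank_mul_mul_transpose_of_orthonormal [Fintype m] [CommRing R] [StrongRankCondition R]
    [DecidableEq k] {A : Matrix m k R} {B : Matrix n k R} (hA : Aᵀ * A = 1) (hB : Bᵀ * B = 1)
    (S : Matrix k k R) : (A * S * Bᵀ).rank = S.rank := by
  refine le_antisymm ((rank_mul_le_left _ _).trans (rank_mul_le_right _ _)) ?_
  have hS : S = Aᵀ * (A * S * Bᵀ) * B := by
    simp only [Matrix.mul_assoc, hB, Matrix.mul_one, ← Matrix.mul_assoc Aᵀ, hA, Matrix.one_mul]
  calc S.rank = (Aᵀ * (A * S * Bᵀ) * B).rank := congrArg rank hS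
    _ ≤ (A * S * Bᵀ).rank := (rank_mul_le_left _ _).trans (rank_mul_le_right _ _)

theorem rank_eq_card_of_diagonal_ne_zero [Field R] {S : Matrix k k R}
    (hdiag : ∀ i j, i ≠ j → S i j = 0) (hnz : ∀ i, S i i ≠ 0) :
    S.rank = Fintype.card k := by
  classical
  have hS : S = diagonal (fun i => S i i) := by
    ext i j
    rcases eq_or_ne i j with rfl | hij
    · simp
    · rw [hdiag i j hij, diagonal_apply_ne _ hij]
  rw [hS, rank_diagonal]
  exact Fintype.card_congr (Equiv.subtypeUnivEquiv hnz)

theorem sub_mul_mul_eq_add_of_add_eq_one [Fintype m] [DecidableEq m] [DecidableEq n] [Ring R]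
    {P₁ P₂ : Matrix m m R} {Q₁ Q₂ : Matrix n n R} (hP : P₁ + P₂ = 1) (hQ : Q₁ + Q₂ = 1)
    (X : Matrix m n R) : X - P₂ * X * Q₂ = P₁ * X + P₂ * X * Q₁ := by
  rw [sub_eq_iff_eq_add, add_assoc, ← Matrix.mul_add, hQ, Matrix.mul_one, ← Matrix.add_mul, hP,
    Matrix.one_mul]

end Matrix

theorem rank_M_le_general
    {m n k m₂ n₂ : Type*} [Fintype m] [Fintype n] [Fintype k] [Fintype m₂] [Fintype n₂]
    [DecidableEq m] [DecidableEq n] [DecidableEq k]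
    (Pi0 : Matrix m n ℝ)
    (U₁ : Matrix m k ℝ) (U₂ : Matrix m m₂ ℝ) (V₁ : Matrix n k ℝ) (V₂ : Matrix n n₂ ℝ)
    (Sig : Matrix k k ℝ)
    (hU1 : U₁ᵀ * U₁ = 1)
    (hUc : U₁ * U₁ᵀ + U₂ * U₂ᵀ = 1)
    (hV1 : V₁ᵀ * V₁ = 1)
    (hVc : V₁ * V₁ᵀ + V₂ * V₂ᵀ = 1)
    (hdiag : ∀ i j, i ≠ j → Sig i j = 0) (hnz : ∀ i, Sig i i ≠ 0)
    (hSVD : Pi0 = U₁ * Sig * V₁ᵀ)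
    (K : ℕ) (hK : Pi0.rank ≤ K + 1)
    (Δ : Matrix m n ℝ) :
    (Δ - U₂ * U₂ᵀ * Δ * (V₂ * V₂ᵀ)).rank ≤ 2 * (K + 1) := by
  have hk : Fintype.card k ≤ K + 1 := by
    rw [← rank_eq_card_of_diagonal_ne_zero hdiag hnz,
      ← rank_mul_mul_transpose_of_orthonormal hU1 hV1, ← hSVD]
    exact hK
  calc (Δ - U₂ * U₂ᵀ * Δ * (V₂ * V₂ᵀ)).rank
      = (U₁ * (U₁ᵀ * Δ) + (U₂ * U₂ᵀ * Δ * V₁) * V₁ᵀ).rank := by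
        rw [sub_mul_mul_eq_add_of_add_eq_one hUc hVc]
        simp only [Matrix.mul_assoc]
    _ ≤ Fintype.card k + Fintype.card k := rank_mul_add_mul_le _ _ _ _
    _ ≤ 2 * (K + 1) := by omega

/-- If Π has rank at most K+1, with SVD structure as described (columns of U₂, V₂ corresponding
to zero singular values), then M(Δ) = Δ − P(Δ) has rank at most 2(K+1). -/
theorem rank_M_le
    {m n k m₂ n₂ : Type*} [Fintype m] [Fintype n] [Fintype k] [Fintype m₂] [Fintype n₂]
    [DecidableEq m] [DecidableEq n] [DecidableEq k] [DecidableEq m₂] [DecidableEq n₂]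
    (Pi0 : Matrix m n ℝ)
    (U₁ : Matrix m k ℝ) (U₂ : Matrix m m₂ ℝ) (V₁ : Matrix n k ℝ) (V₂ : Matrix n n₂ ℝ)
    (Sig : Matrix k k ℝ)
    (hU1 : U₁ᵀ * U₁ = 1) (hU2 : U₂ᵀ * U₂ = 1) (hU12 : U₁ᵀ * U₂ = 0)
    (hUc : U₁ * U₁ᵀ + U₂ * U₂ᵀ = 1)
    (hV1 : V₁ᵀ * V₁ = 1) (hV2 : V₂ᵀ * V₂ = 1) (hV12 : V₁ᵀ * V₂ = 0)
    (hVc : V₁ * V₁ᵀ + V₂ * V₂ᵀ = 1)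
    (hdiag : ∀ i j, i ≠ j → Sig i j = 0) (hnz : ∀ i, Sig i i ≠ 0)
    (hSVD : Pi0 = U₁ * Sig * V₁ᵀ)
    (K : ℕ) (hK : Pi0.rank ≤ K + 1)
    (Δ : Matrix m n ℝ) :
    (Δ - U₂ * U₂ᵀ * Δ * (V₂ * V₂ᵀ)).rank ≤ 2 * (K + 1) :=
  rank_M_le_general Pi0 U₁ U₂ V₁ V₂ Sig hU1 hUc hV1 hVc hdiag hnz hSVD K hK Δ
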